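/- If some purification of a density matrix ρ on ℂ^{n₁} ⊗ ℂ^{n₂} achieves zero entropy across the (A₁A'₁ : A₂A'₂) cut — i.e., there exist m₁, m₂ ≥ 1 and a unit vector ψ ∈ (ℂ^{n₁} ⊗ ℂ^{m₁}) ⊗ (ℂ^{n₂} ⊗ ℂ^{m₂}) whose partial trace over ℂ^{m₁} ⊗ ℂ^{m₂} equals ρ and with S(Tr_{A₂A'₂} |ψ⟩⟨ψ|) = 0 — then ρ is a product state: ρ = ρ₁ ⊗ ρ₂ with ρ₁ = Tr₂ ρ and ρ₂ = Tr₁ ρ. -/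

import Mathlib

open scoped Kronecker ComplexOrder

/-- A density matrix: positive semidefinite with trace 1. -/
def IsDensityMatrix {d : Type*} [Fintype d] (ρ : Matrix d d ℂ) : Prop :=
  ρ.PosSemidef ∧ ρ.trace = 1

/-- The rank-one outer product `|ψ⟩⟨ψ|` of a vector. -/
noncomputable def outerProd {d : Type*} (ψ : d → ℂ) : Matrix d d ℂ :=
  Matrix.vecMulVec ψ (star ψ)

/-- Partial trace over the second tensor factor. -/
noncomputable def ptrace₂ {α β : Type*} [Fintype β] (σ : Matrix (α × β) (α × β) ℂ) :
    Matrix α α ℂ :=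
  Matrix.of fun i i' => ∑ j, σ (i, j) (i', j)

/-- Partial trace over the first tensor factor. -/
noncomputable def ptrace₁ {α β : Type*} [Fintype α] (σ : Matrix (α × β) (α × β) ℂ) :
    Matrix β β ℂ :=
  Matrix.of fun j j' => ∑ i, σ (i, j) (i, j')

/-- Von Neumann entropy `S(ρ) = -∑ λᵢ log λᵢ` over the eigenvalues of `ρ`. -/
noncomputable def vnEntropy {d : Type*} [Fintype d] [DecidableEq d] (ρ : Matrix d d ℂ) : ℝ :=
  if h : ρ.IsHermitian then ∑ i, Real.negMulLog (h.eigenvalues i) else 0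

/-- Partial trace over the two ancilla factors `ℂ^{m₁} ⊗ ℂ^{m₂}` of a matrix on
`(ℂ^{n₁} ⊗ ℂ^{m₁}) ⊗ (ℂ^{n₂} ⊗ ℂ^{m₂})`, giving a matrix on `ℂ^{n₁} ⊗ ℂ^{n₂}`. -/
noncomputable def ptraceAnc {n₁ m₁ n₂ m₂ : ℕ}
    (σ : Matrix ((Fin n₁ × Fin m₁) × (Fin n₂ × Fin m₂))
      ((Fin n₁ × Fin m₁) × (Fin n₂ × Fin m₂)) ℂ) :
    Matrix (Fin n₁ × Fin n₂) (Fin n₁ × Fin n₂) ℂ :=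
  Matrix.of fun p q => ∑ j₁ : Fin m₁, ∑ j₂ : Fin m₂,
    σ ((p.1, j₁), (p.2, j₂)) ((q.1, j₁), (q.2, j₂))

/-- The entanglement of purification `E_P(ρ)`: the infimum of
`S(Tr_{A₂A'₂} |ψ⟩⟨ψ|)` over all purifications `ψ` of `ρ` in
`(ℂ^{n₁} ⊗ ℂ^{m₁}) ⊗ (ℂ^{n₂} ⊗ ℂ^{m₂})`. -/
noncomputable def entPurification {n₁ n₂ : ℕ}
    (ρ : Matrix (Fin n₁ × Fin n₂) (Fin n₁ × Fin n₂) ℂ) : ℝ :=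
  sInf {x : ℝ | ∃ (m₁ m₂ : ℕ), 1 ≤ m₁ ∧ 1 ≤ m₂ ∧
    ∃ ψ : (Fin n₁ × Fin m₁) × (Fin n₂ × Fin m₂) → ℂ,
      (∑ z, ‖ψ z‖ ^ 2 = 1) ∧ ptraceAnc (outerProd ψ) = ρ ∧
      x = vnEntropy (ptrace₂ (outerProd ψ))}

/-! Zero entropy forces the reduced state `τ` of `ψ` on `A₁A'₁` to be pure: its eigenvalues form
a probability vector of zero Shannon entropy, hence a point mass, so `τ = |φ⟩⟨φ|`. Reading `ψ`
as a matrix `M` with `M Mᴴ = τ` a projector gives `M = M Mᴴ M = |φ⟩(⟨φ| M)`, i.e. `ψ = φ ⊗ c` is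
a product vector across the cut. Tracing the ancillas out of a product vector yields a Kronecker
product `A ⊗ B`, and a Kronecker product of trace one is the product of its two marginals. -/

open Matrix

lemma Real.negMulLog_eq_zero_iff {x : ℝ} (hx : 0 ≤ x) :
    Real.negMulLog x = 0 ↔ x = 0 ∨ x = 1 := by
  rw [Real.negMulLog, neg_mul, neg_eq_zero, mul_eq_zero, Real.log_eq_zero]
  constructor
  · rintro (h | h | h | h) <;> first | exact .inl h | exact .inr h | linarith
  · rintro (h | h) <;> simp [h]

lemma exists_eq_single_of_sum_negMulLog_eq_zero {ι : Type*} [Fintype ι] [DecidableEq ι]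
    {p : ι → ℝ} (hp : ∀ i, 0 ≤ p i) (hsum : ∑ i, p i = 1)
    (hent : ∑ i, Real.negMulLog (p i) = 0) : ∃ k, p = Pi.single k 1 := by
  have hle : ∀ i, p i ≤ 1 := fun i =>
    hsum ▸ Finset.single_le_sum (fun j _ => hp j) (Finset.mem_univ i)
  have hbin : ∀ i, p i = 0 ∨ p i = 1 := fun i =>
    (Real.negMulLog_eq_zero_iff (hp i)).1 <| (Finset.sum_eq_zero_iff_of_nonneg
      fun j _ => Real.negMulLog_nonneg (hp j) (hle j)).1 hent i (Finset.mem_univ i)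
  obtain ⟨k, hk⟩ : ∃ k, p k ≠ 0 := by
    by_contra! h
    simp [h] at hsum
  have hk1 : p k = 1 := (hbin k).resolve_left hk
  have hrest : ∑ i ∈ {k}ᶜ, p i = 0 := by
    linarith [Fintype.sum_eq_add_sum_compl k p]
  refine ⟨k, funext fun i => ?_⟩
  rcases eq_or_ne i k with rfl | hik
  · simp [hk1]
  · rw [Pi.single_eq_of_ne hik]
    exact (Finset.sum_eq_zero_iff_of_nonneg fun j _ => hp j).1 hrest i (by simpa using hik)

lemma Matrix.IsHermitian.eq_vecMulVec_of_eigenvalues_eq_single {𝕜 n : Type*} [RCLike 𝕜]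
    [Fintype n] [DecidableEq n] {A : Matrix n n 𝕜} (hA : A.IsHermitian) {k : n}
    (hk : hA.eigenvalues = Pi.single k 1) :
    A = vecMulVec ⇑(hA.eigenvectorBasis k) (star ⇑(hA.eigenvectorBasis k)) := by
  conv_lhs => rw [hA.spectral_theorem]
  ext i j
  simp [mul_apply, hk, vecMulVec_apply, diagonal_apply, Pi.single_apply]

lemma IsDensityMatrix.exists_eq_outerProd_of_vnEntropy_eq_zero {d : Type*} [Fintype d]
    [DecidableEq d] {τ : Matrix d d ℂ} (hτ : IsDensityMatrix τ) (hent : vnEntropy τ = 0) :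
    ∃ φ : d → ℂ, τ = outerProd φ := by
  obtain ⟨hpsd, htr⟩ := hτ
  have hsum : ∑ i, hpsd.1.eigenvalues i = 1 := by
    have := hpsd.1.trace_eq_sum_eigenvalues.symm.trans htr
    exact RCLike.ofReal_injective (K := ℂ) (by push_cast; exact this)
  rw [vnEntropy, dif_pos hpsd.1] at hent
  obtain ⟨k, hk⟩ := exists_eq_single_of_sum_negMulLog_eq_zero hpsd.eigenvalues_nonneg hsum hent
  exact ⟨_, hpsd.1.eq_vecMulVec_of_eigenvalues_eq_single hk⟩

lemma Matrix.mul_conjTranspose_mul_self_eq_self {R m n : Type*} [Ring R] [PartialOrder R]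
    [StarRing R] [StarOrderedRing R] [NoZeroDivisors R] [Fintype m] [Fintype n] [DecidableEq m]
    {M : Matrix m n R} (h : IsIdempotentElem (M * Mᴴ)) : M * Mᴴ * M = M := by
  have : (1 - M * Mᴴ) * (M * Mᴴ) = 0 := by rw [sub_mul, one_mul, h.eq, sub_self]
  rw [mul_self_mul_conjTranspose_eq_zero, Matrix.sub_mul, Matrix.one_mul, sub_eq_zero] at this
  exact this.symm

lemma isIdempotentElem_outerProd {d : Type*} [Fintype d] {φ : d → ℂ} (hφ : φ ⬝ᵥ star φ = 1) :
    IsIdempotentElem (outerProd φ) := by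
  rw [IsIdempotentElem, outerProd, vecMulVec_mul_vecMulVec, dotProduct_comm, hφ, one_smul]

lemma ptrace₂_outerProd {α β : Type*} [Fintype β] (ψ : α × β → ℂ) :
    ptrace₂ (outerProd ψ) = of (Function.curry ψ) * (of (Function.curry ψ))ᴴ := by
  ext i i'
  simp [ptrace₂, outerProd, vecMulVec_apply, mul_apply]

lemma trace_ptrace₂ {α β : Type*} [Fintype α] [Fintype β] (σ : Matrix (α × β) (α × β) ℂ) :
    (ptrace₂ σ).trace = σ.trace := by
  simp [ptrace₂, trace, Fintype.sum_prod_type]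

lemma isDensityMatrix_ptrace₂_outerProd {α β : Type*} [Fintype α] [Fintype β] {ψ : α × β → ℂ}
    (hψ : ∑ z, ‖ψ z‖ ^ 2 = 1) : IsDensityMatrix (ptrace₂ (outerProd ψ)) := by
  refine ⟨ptrace₂_outerProd ψ ▸ posSemidef_self_mul_conjTranspose _, ?_⟩
  rw [trace_ptrace₂, outerProd, trace_vecMulVec, dotProduct]
  simp_rw [Pi.star_apply, RCLike.star_def, Complex.mul_conj']
  exact_mod_cast hψ

lemma exists_eq_mul_of_ptrace₂_outerProd_eq_outerProd {α β : Type*} [Fintype α] [Fintype β]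
    [DecidableEq α] {ψ : α × β → ℂ} {φ : α → ℂ} (hψ : ptrace₂ (outerProd ψ) = outerProd φ)
    (hφ : φ ⬝ᵥ star φ = 1) : ∃ c : β → ℂ, ∀ i j, ψ (i, j) = φ i * c j := by
  set M := of (Function.curry ψ)
  rw [ptrace₂_outerProd] at hψ
  have hM : M = vecMulVec φ (star φ ᵥ* M) := by
    rw [← vecMulVec_mul, ← outerProd, ← hψ,
      mul_conjTranspose_mul_self_eq_self (hψ ▸ isIdempotentElem_outerProd hφ)]
  exact ⟨star φ ᵥ* M, fun i j => congrFun (congrFun hM i) j⟩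

lemma ptraceAnc_outerProd_mul {n₁ m₁ n₂ m₂ : ℕ} (φ : Fin n₁ × Fin m₁ → ℂ)
    (c : Fin n₂ × Fin m₂ → ℂ) :
    ptraceAnc (outerProd fun z => φ z.1 * c z.2) =
      ptrace₂ (outerProd φ) ⊗ₖ ptrace₂ (outerProd c) := by
  ext p q
  simp only [ptraceAnc, ptrace₂, outerProd, of_apply, vecMulVec_apply, kroneckerMap_apply,
    Pi.star_apply, star_mul', Finset.sum_mul_sum]
  exact Finset.sum_congr rfl fun _ _ => Finset.sum_congr rfl fun _ _ => by ring

lemma ptrace₂_kronecker {α β : Type*} [Fintype β] (A : Matrix α α ℂ) (B : Matrix β β ℂ) :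
    ptrace₂ (A ⊗ₖ B) = B.trace • A := by
  ext i i'
  simp [ptrace₂, trace, Finset.mul_sum, mul_comm]

lemma ptrace₁_kronecker {α β : Type*} [Fintype α] (A : Matrix α α ℂ) (B : Matrix β β ℂ) :
    ptrace₁ (A ⊗ₖ B) = A.trace • B := by
  ext j j'
  simp [ptrace₁, trace, Finset.sum_mul]

lemma ptrace₂_kronecker_ptrace₁ {α β : Type*} [Fintype α] [Fintype β] (A : Matrix α α ℂ)
    (B : Matrix β β ℂ) :
    ptrace₂ (A ⊗ₖ B) ⊗ₖ ptrace₁ (A ⊗ₖ B) = (A ⊗ₖ B).trace • (A ⊗ₖ B) := by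
  rw [ptrace₂_kronecker, ptrace₁_kronecker, smul_kronecker, kronecker_smul, smul_smul,
    trace_kronecker, mul_comm]

/-- If some purification of `ρ` achieves zero entropy across the
`(A₁A'₁ : A₂A'₂)` cut, then `ρ` is a product state. -/
theorem product_of_zero_entropy_purification {n₁ n₂ : ℕ}
    (ρ : Matrix (Fin n₁ × Fin n₂) (Fin n₁ × Fin n₂) ℂ) (hρ : IsDensityMatrix ρ)
    (h : ∃ (m₁ m₂ : ℕ), 1 ≤ m₁ ∧ 1 ≤ m₂ ∧
      ∃ ψ : (Fin n₁ × Fin m₁) × (Fin n₂ × Fin m₂) → ℂ,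
        (∑ z, ‖ψ z‖ ^ 2 = 1) ∧ ptraceAnc (outerProd ψ) = ρ ∧
        vnEntropy (ptrace₂ (outerProd ψ)) = 0) :
    ρ = (ptrace₂ ρ) ⊗ₖ (ptrace₁ ρ) := by
  obtain ⟨m₁, m₂, -, -, ψ, hnorm, rfl, hent⟩ := h
  have hτ := isDensityMatrix_ptrace₂_outerProd hnorm
  obtain ⟨φ, hφ⟩ := hτ.exists_eq_outerProd_of_vnEntropy_eq_zero hent
  have hφ1 : φ ⬝ᵥ star φ = 1 := by
    rw [← trace_vecMulVec, ← outerProd, ← hφ, hτ.2]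
  obtain ⟨c, hc⟩ := exists_eq_mul_of_ptrace₂_outerProd_eq_outerProd hφ hφ1
  obtain rfl : ψ = fun z => φ z.1 * c z.2 := funext fun z => hc z.1 z.2
  rw [ptraceAnc_outerProd_mul] at hρ ⊢
  rw [ptrace₂_kronecker_ptrace₁, hρ.2, one_smul]
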